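/- For α > -1 and n ≥ 0, the Laguerre functions l_n^α(x) = 1_{[0,∞)}(x) e^{-x/2} x^{α/2} L_n^α(x) form an orthogonal system in L²(0,∞); that is, ∫_0^∞ l_n^α(x) l_m^α(x) dx = 0 whenever n ≠ m. -/
import Mathlib

open Real MeasureTheory Finset

/-- The Laguerre polynomial `L_n^α` in power-series form. -/
noncomputable def laguerreL (α : ℝ) (n : ℕ) (x : ℝ) : ℝ :=
  ((ascPochhammer ℝ n).eval (α + 1) / n.factorial) *
    ∑ k ∈ Finset.range (n + 1),
      ((ascPochhammer ℝ k).eval (-(n : ℝ)) / (ascPochhammer ℝ k).eval (α + 1))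
        * x ^ k / k.factorial

/-- The Laguerre function `l_n^α(x) = 1_{[0,∞)}(x) e^{-x/2} x^{α/2} L_n^α(x)`. -/
noncomputable def laguerreFun (α : ℝ) (n : ℕ) (x : ℝ) : ℝ :=
  Set.indicator (Set.Ici 0) (fun y => Real.exp (-y / 2) * y ^ (α / 2) * laguerreL α n y) x

open Polynomial in
lemma fd_poly (p : ℝ[X]) :
    fwdDiff (1:ℝ) (fun x => p.eval x) = fun x => (p.comp (X + 1) - p).eval x := by
  funext x
  simp [fwdDiff, eval_comp]

open Polynomial in
lemma fd_iter_zero : ∀ n : ℕ, ∀ p : ℝ[X], p.natDegree < n →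
    (fwdDiff (1:ℝ))^[n] (fun x => p.eval x) = fun _ => 0 := by
  intro n
  induction n with
  | zero => intro p hp; omega
  | succ n ih =>
    intro p hp
    rw [Function.iterate_succ_apply, fd_poly]
    set q : ℝ[X] := p.comp (X + 1) - p with hq
    by_cases hq0 : q = 0
    · rw [hq0]
      simp only [eval_zero]
      exact Function.iterate_fixed (by simp [fwdDiff_const]) n
    · have hp0 : p ≠ 0 := by
        intro h; apply hq0; rw [hq, h]; simp
      have hd0 : p.natDegree ≠ 0 := by
        intro h
        obtain ⟨c, hc⟩ := natDegree_eq_zero.mp h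
        apply hq0
        rw [hq, ← hc]
        simp
      have hX1 : (X + 1 : ℝ[X]) = X + C 1 := by rw [map_one]
      have hlc : (p.comp (X + 1)).leadingCoeff = p.leadingCoeff := by
        rw [hX1, leadingCoeff_comp (by rw [natDegree_X_add_C]; exact one_ne_zero),
          leadingCoeff_X_add_C]
        simp
      have hcne : p.comp (X + 1) ≠ 0 := fun h => hp0 (leadingCoeff_eq_zero.mp
        (by rw [← hlc, h, leadingCoeff_zero]))
      have hnd : (p.comp (X + 1)).natDegree = p.natDegree := by
        rw [hX1, natDegree_comp, natDegree_X_add_C, mul_one]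
      have hdeg : (p.comp (X + 1)).degree = p.degree := by
        rw [degree_eq_natDegree hcne, degree_eq_natDegree hp0, hnd]
      have hqlt : q.degree < p.degree := by
        have := degree_sub_lt hdeg hcne hlc
        rwa [hdeg] at this
      have : q.natDegree < p.natDegree := natDegree_lt_natDegree hq0 hqlt
      exact ih q (by omega)

open Polynomial in
lemma alt_sum (n : ℕ) (p : ℝ[X]) (h : p.natDegree < n) :
    ∑ j ∈ range (n + 1), (-1:ℝ) ^ j * (n.choose j) * p.eval (j:ℝ) = 0 := by
  have h1 : (fwdDiff (1:ℝ))^[n] (fun x => p.eval x) 0 = 0 := by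
    rw [fd_iter_zero n p h]
  rw [fwdDiff_iter_eq_sum_shift] at h1
  have key : ∑ k ∈ range (n + 1), (-1:ℝ) ^ (n - k) * (n.choose k) * p.eval (k:ℝ) = 0 := by
    rw [← h1]
    refine (Finset.sum_congr rfl fun k _ => ?_).symm
    push_cast [zsmul_eq_mul, nsmul_eq_mul]
    ring_nf
  calc ∑ j ∈ range (n + 1), (-1:ℝ) ^ j * (n.choose j) * p.eval (j:ℝ)
      = ∑ j ∈ range (n + 1), (-1:ℝ) ^ n * ((-1:ℝ) ^ (n - j) * (n.choose j) * p.eval (j:ℝ)) := by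
        refine Finset.sum_congr rfl fun j hj => ?_
        have hjn : j ≤ n := by simpa [Nat.lt_succ_iff] using Finset.mem_range.mp hj
        have hpow : (-1:ℝ) ^ n * (-1:ℝ) ^ (n - j) = (-1:ℝ) ^ j := by
          rw [← pow_add, show n + (n - j) = j + 2 * (n - j) by omega, pow_add, pow_mul]
          norm_num
        rw [← mul_assoc, ← mul_assoc, hpow]
    _ = (-1:ℝ) ^ n * ∑ j ∈ range (n + 1), (-1:ℝ) ^ (n - j) * (n.choose j) * p.eval (j:ℝ) := by
        rw [Finset.mul_sum]
    _ = 0 := by rw [key, mul_zero]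

lemma integrableOn_exp_rpow {α : ℝ} (hα : -1 < α) (m : ℕ) :
    IntegrableOn (fun x : ℝ => Real.exp (-x) * x ^ (α + m)) (Set.Ioi 0) := by
  have hpos : 0 < α + m + 1 := by have : (0:ℝ) ≤ m := Nat.cast_nonneg m; linarith
  have h := Real.GammaIntegral_convergent (s := α + m + 1) hpos
  simpa using h

lemma integral_exp_rpow {α : ℝ} (hα : -1 < α) (m : ℕ) :
    ∫ x in Set.Ioi (0:ℝ), Real.exp (-x) * x ^ (α + m) = Real.Gamma (α + 1 + m) := by
  have hpos : 0 < α + 1 + m := by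
    have : (0:ℝ) ≤ m := Nat.cast_nonneg m
    linarith
  have h := Real.Gamma_eq_integral hpos
  simp only [show α + 1 + (m:ℝ) - 1 = α + m by ring] at h
  exact h.symm

open Polynomial in
lemma Gamma_poch {α : ℝ} (hα : -1 < α) (m : ℕ) :
    Real.Gamma (α + 1 + m) = Real.Gamma (α + 1) * (ascPochhammer ℝ m).eval (α + 1) := by
  induction m with
  | zero => simp
  | succ m ih =>
    have hpos : (0:ℝ) < α + 1 + m := by
      have : (0:ℝ) ≤ m := Nat.cast_nonneg m
      linarith
    have hne : α + 1 + (m:ℝ) ≠ 0 := hpos.ne'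
    push_cast
    rw [show α + 1 + ((m:ℝ) + 1) = (α + 1 + m) + 1 by ring, Real.Gamma_add_one hne, ih,
      ascPochhammer_succ_eval]
    ring

/-- The coefficient of `x^k` in `laguerreL α n`. -/
noncomputable def lagCoeff (α : ℝ) (n k : ℕ) : ℝ :=
  ((ascPochhammer ℝ n).eval (α + 1) / n.factorial) *
    ((ascPochhammer ℝ k).eval (-(n : ℝ)) / (ascPochhammer ℝ k).eval (α + 1)) / k.factorial

lemma laguerreL_eq (α : ℝ) (n : ℕ) (x : ℝ) :
    laguerreL α n x = ∑ k ∈ range (n + 1), lagCoeff α n k * x ^ k := by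
  unfold laguerreL lagCoeff
  rw [Finset.mul_sum]
  exact Finset.sum_congr rfl fun k _ => by ring

lemma eqOn_expand (α : ℝ) (n k : ℕ) : Set.EqOn
    (fun x => Real.exp (-x) * x ^ (α + k) * laguerreL α n x)
    (fun x => ∑ j ∈ range (n + 1),
      lagCoeff α n j * (Real.exp (-x) * x ^ (α + (k + j : ℕ))))
    (Set.Ioi 0) := by
  intro x hx
  have hx0 : (0:ℝ) < x := hx
  simp only
  rw [laguerreL_eq, Finset.mul_sum]
  refine Finset.sum_congr rfl fun j _ => ?_
  have hXk : x ^ (α + (k:ℝ)) * x ^ j = x ^ (α + ((k + j : ℕ) : ℝ)) := by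
    rw [← Real.rpow_natCast x j, ← Real.rpow_add hx0]
    push_cast
    ring_nf
  calc Real.exp (-x) * x ^ (α + (k:ℝ)) * (lagCoeff α n j * x ^ j)
      = lagCoeff α n j * (Real.exp (-x) * (x ^ (α + (k:ℝ)) * x ^ j)) := by ring
    _ = _ := by rw [hXk]

lemma integrableOn_term {α : ℝ} (hα : -1 < α) (n k : ℕ) :
    IntegrableOn (fun x => Real.exp (-x) * x ^ (α + k) * laguerreL α n x) (Set.Ioi 0) := by
  have h : IntegrableOn (fun x => ∑ j ∈ range (n + 1),
      lagCoeff α n j * (Real.exp (-x) * x ^ (α + (k + j : ℕ)))) (Set.Ioi 0) :=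
    integrable_finset_sum _ fun j _ => (integrableOn_exp_rpow hα (k + j)).const_mul _
  exact h.congr_fun (eqOn_expand α n k).symm measurableSet_Ioi

open Polynomial in
lemma asc_add_eval (α : ℝ) (j k : ℕ) :
    (ascPochhammer ℝ (j + k)).eval (α + 1)
      = (ascPochhammer ℝ j).eval (α + 1) * (ascPochhammer ℝ k).eval (α + 1 + j) := by
  rw [← ascPochhammer_mul]
  simp [eval_comp]

open Polynomial in
lemma integral_monomial {α : ℝ} (hα : -1 < α) {n k : ℕ} (hk : k < n) :
    ∫ x in Set.Ioi (0:ℝ), Real.exp (-x) * x ^ (α + k) * laguerreL α n x = 0 := by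
  rw [setIntegral_congr_fun measurableSet_Ioi (eqOn_expand α n k),
    integral_finset_sum _ (fun j _ => ((integrableOn_exp_rpow hα (k + j)).const_mul _))]
  have hstep : ∀ j ∈ range (n + 1),
      ∫ x in Set.Ioi (0:ℝ), lagCoeff α n j * (Real.exp (-x) * x ^ (α + (k + j : ℕ)))
        = lagCoeff α n j * (Real.Gamma (α + 1) * (ascPochhammer ℝ (j + k)).eval (α + 1)) := by
    intro j _
    rw [integral_const_mul, integral_exp_rpow hα, Gamma_poch hα, Nat.add_comm k j]
  rw [Finset.sum_congr rfl hstep]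
  -- now pure algebra
  set q : ℝ[X] := (ascPochhammer ℝ k).comp (X + C (α + 1)) with hq
  have hqdeg : q.natDegree < n := by
    rw [hq, natDegree_comp, natDegree_X_add_C, mul_one, ascPochhammer_natDegree]
    exact hk
  have hterm : ∀ j ∈ range (n + 1),
      lagCoeff α n j * (Real.Gamma (α + 1) * (ascPochhammer ℝ (j + k)).eval (α + 1))
        = (Real.Gamma (α + 1) * ((ascPochhammer ℝ n).eval (α + 1) / n.factorial)) *
            ((-1:ℝ) ^ j * (n.choose j) * q.eval (j:ℝ)) := by
    intro j _
    have hqe : q.eval (j:ℝ) = (ascPochhammer ℝ k).eval (α + 1 + j) := by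
      rw [hq, eval_comp]
      simp [add_comm]
    have hneg : (ascPochhammer ℝ j).eval (-(n:ℝ))
        = (-1:ℝ) ^ j * ((j.factorial : ℝ) * (n.choose j)) := by
      rw [ascPochhammer_eval_neg_eq_descPochhammer, descPochhammer_eval_eq_descFactorial,
        Nat.descFactorial_eq_factorial_mul_choose]
      push_cast
      ring
    have hc1 : (ascPochhammer ℝ j).eval (α + 1) ≠ 0 :=
      (ascPochhammer_pos j _ (by linarith)).ne'
    have hjf : (j.factorial : ℝ) ≠ 0 := Nat.cast_ne_zero.mpr j.factorial_ne_zero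
    rw [asc_add_eval, hqe, lagCoeff, hneg]
    field_simp
  rw [Finset.sum_congr rfl hterm, ← Finset.mul_sum, alt_sum n q hqdeg, mul_zero]

lemma key_orth {α : ℝ} (hα : -1 < α) {a b : ℕ} (hba : b < a) :
    ∫ x in Set.Ioi (0:ℝ), laguerreFun α a x * laguerreFun α b x = 0 := by
  have hEq : Set.EqOn (fun x => laguerreFun α a x * laguerreFun α b x)
      (fun x => ∑ k ∈ range (b + 1),
        lagCoeff α b k * (Real.exp (-x) * x ^ (α + k) * laguerreL α a x)) (Set.Ioi 0) := by
    intro x hx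
    have hx0 : (0:ℝ) < x := hx
    have hx1 : x ∈ Set.Ici (0:ℝ) := le_of_lt hx0
    simp only [laguerreFun, Set.indicator_of_mem hx1]
    have hE : Real.exp (-x / 2) * Real.exp (-x / 2) = Real.exp (-x) := by
      rw [← Real.exp_add]; ring_nf
    have hP : x ^ (α / 2) * x ^ (α / 2) = x ^ α := by
      rw [← Real.rpow_add hx0, add_halves]
    have hXk : ∀ k : ℕ, x ^ α * x ^ k = x ^ (α + (k:ℝ)) := fun k => by
      rw [← Real.rpow_natCast x k, ← Real.rpow_add hx0]
    calc Real.exp (-x / 2) * x ^ (α / 2) * laguerreL α a x *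
          (Real.exp (-x / 2) * x ^ (α / 2) * laguerreL α b x)
        = (Real.exp (-x / 2) * Real.exp (-x / 2)) * (x ^ (α / 2) * x ^ (α / 2)) *
            laguerreL α a x * laguerreL α b x := by ring
      _ = Real.exp (-x) * x ^ α * laguerreL α a x * laguerreL α b x := by rw [hE, hP]
      _ = ∑ k ∈ range (b + 1),
            lagCoeff α b k * (Real.exp (-x) * (x ^ α * x ^ k) * laguerreL α a x) := by
          rw [laguerreL_eq α b, Finset.mul_sum]
          exact Finset.sum_congr rfl fun k _ => by ring
      _ = _ := Finset.sum_congr rfl fun k _ => by rw [hXk k]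
  rw [setIntegral_congr_fun measurableSet_Ioi hEq,
    integral_finset_sum _ (fun k _ => (integrableOn_term hα a k).const_mul _)]
  refine Finset.sum_eq_zero fun k hk => ?_
  have hkb : k < a := by
    have := Finset.mem_range.mp hk
    omega
  rw [integral_const_mul, integral_monomial hα hkb, mul_zero]

/-- Laguerre functions are orthogonal in L²(0,∞). -/
theorem laguerreFun_orthogonal (α : ℝ) (hα : -1 < α) (n m : ℕ) (hnm : n ≠ m) :
    ∫ x in Set.Ioi (0 : ℝ), laguerreFun α n x * laguerreFun α m x = 0 := by
  rcases hnm.lt_or_gt with h | h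
  · have := key_orth hα h
    calc ∫ x in Set.Ioi (0:ℝ), laguerreFun α n x * laguerreFun α m x
        = ∫ x in Set.Ioi (0:ℝ), laguerreFun α m x * laguerreFun α n x := by
          simp_rw [mul_comm]
      _ = 0 := this
  · exact key_orth hα h
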